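/- arXiv:1601.05756 — 2 statements merged into one kernel-verified Lean document; each statement's English description precedes it below -/
import Mathlib

section
/- For every ω ∈ Ω and every t ∈ [0,T] such that s ↦ R(O_{⌊s⌋}(ω)) is Lebesgue integrable on [0,t], it holds that ‖F(Y_t(ω) + O_t(ω))‖_W ≤ C·( 1 + 2^{max{q−1,0}}·e^{cqt}·( (U(Y_0(ω)))^q + (∫_0^t R(O_{⌊s⌋}(ω)) ds)^q ) + (U(O_t(ω)))^q ). (Lemma 2.2 of the paper.) -/
/-!
Between consecutive grid points `kδ < t ≤ (k+1)δ` the mild formulation collapses, by the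
semigroup property, to the single explicit step `Y_t = S_{kδ,t}(Y_{kδ} + (t - kδ) F_k)`, so the
Lyapunov hypothesis bounds `U(Y_t)` by `e^{c(t-kδ)} (U(Y_{kδ}) + (t - kδ) R(O_{kδ}))`. Chaining
these steps gives `U(Y_t) ≤ e^{ct} (U(Y_0) + ∫_0^t R(O_{⌊s⌋}) ds)`; the bound on
`‖F(Y_t + O_t)‖` then follows from the growth condition on `F` and
`(a + b)^q ≤ 2^{max(q-1,0)} (a^q + b^q)`.
-/

open MeasureTheory Set

/-- `⌊t⌋_h = max({0, h, −h, 2h, −2h, …} ∩ (−∞, t])` for `h > 0`. -/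
noncomputable def hfloor (h t : ℝ) : ℝ := h * (⌊t / h⌋ : ℝ)

lemma hfloor_nonneg {h s : ℝ} (hh : 0 < h) (hs : 0 ≤ s) : 0 ≤ hfloor h s :=
  mul_nonneg hh.le (mod_cast Int.floor_nonneg.mpr (div_nonneg hs hh.le))

lemma hfloor_le {h : ℝ} (hh : 0 < h) (s : ℝ) : hfloor h s ≤ s :=
  calc hfloor h s ≤ h * (s / h) := mul_le_mul_of_nonneg_left (Int.floor_le _) hh.le
    _ = s := mul_div_cancel₀ s hh.ne'

lemma hfloor_eq_of_mem_Ico {h : ℝ} (hh : 0 < h) (k : ℤ) {s : ℝ}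
    (hs : s ∈ Ico (k * h) ((k + 1) * h)) : hfloor h s = k * h := by
  have hfl : ⌊s / h⌋ = k := by
    rw [Int.floor_eq_iff, le_div_iff₀ hh, div_lt_iff₀ hh]
    exact hs
  rw [hfloor, hfl, mul_comm]

lemma setIntegral_Ioc_eq_smul_of_eqOn_Ioo {E : Type*} [NormedAddCommGroup E] [NormedSpace ℝ E]
    [CompleteSpace E] {f : ℝ → E} {a b : ℝ} (hab : a ≤ b) {v : E}
    (hf : EqOn f (fun _ ↦ v) (Ioo a b)) :
    ∫ s in Ioc a b, f s = (b - a) • v := by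
  rw [integral_Ioc_eq_integral_Ioo, setIntegral_congr_fun measurableSet_Ioo hf,
    setIntegral_const, Real.volume_real_Ioo_of_le hab]

lemma setIntegral_Ioc_comp_hfloor {E : Type*} [NormedAddCommGroup E] [NormedSpace ℝ E]
    [CompleteSpace E] {δ : ℝ} (hδ : 0 < δ) (k : ℤ) {t : ℝ} (hkt : k * δ ≤ t)
    (htk : t ≤ (k + 1) * δ) (f : ℝ → E) :
    ∫ s in Ioc (k * δ) t, f (hfloor δ s) = (t - k * δ) • f (k * δ) :=
  setIntegral_Ioc_eq_smul_of_eqOn_Ioo hkt fun s hs ↦ by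
    simp only [hfloor_eq_of_mem_Ico hδ k ⟨hs.1.le, hs.2.trans_le htk⟩]

lemma setIntegral_Ioc_add_Ioc {E : Type*} [NormedAddCommGroup E] [NormedSpace ℝ E]
    {f : ℝ → E} {a b c : ℝ} (hab : a ≤ b) (hbc : b ≤ c) (hf : IntegrableOn f (Ioc a c)) :
    ∫ s in Ioc a c, f s = (∫ s in Ioc a b, f s) + ∫ s in Ioc b c, f s := by
  rw [← Ioc_union_Ioc_eq_Ioc hab hbc] at hf ⊢
  exact setIntegral_union (Ioc_disjoint_Ioc_of_le le_rfl) measurableSet_Ioc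
    (hf.mono_set subset_union_left) (hf.mono_set subset_union_right)

lemma Real.add_rpow_le_two_rpow_mul_add_rpow {q : ℝ} (hq : 0 ≤ q) {a b : ℝ} (ha : 0 ≤ a)
    (hb : 0 ≤ b) : (a + b) ^ q ≤ 2 ^ max (q - 1) 0 * (a ^ q + b ^ q) := by
  lift a to NNReal using ha
  lift b to NNReal using hb
  rcases le_total q 1 with hq1 | hq1
  · rw [max_eq_right (by linarith), Real.rpow_zero, one_mul]
    exact_mod_cast NNReal.rpow_add_le_add_rpow a b hq hq1
  · rw [max_eq_left (by linarith)]
    exact_mod_cast NNReal.rpow_add_le_mul_rpow_add_rpow a b hq1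

lemma Real.rpow_le_of_le_exp_mul_add {q c t x a b : ℝ} (hq : 0 ≤ q) (hx : 0 ≤ x)
    (ha : 0 ≤ a) (hb : 0 ≤ b) (h : x ≤ Real.exp (c * t) * (a + b)) :
    x ^ q ≤ 2 ^ max (q - 1) 0 * Real.exp (c * q * t) * (a ^ q + b ^ q) :=
  calc x ^ q ≤ (Real.exp (c * t) * (a + b)) ^ q := by gcongr
    _ = Real.exp (c * q * t) * (a + b) ^ q := by
      rw [Real.mul_rpow (Real.exp_nonneg _) (add_nonneg ha hb), ← Real.exp_mul]
      ring_nf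
    _ ≤ Real.exp (c * q * t) * (2 ^ max (q - 1) 0 * (a ^ q + b ^ q)) := by
      gcongr
      exact Real.add_rpow_le_two_rpow_mul_add_rpow hq ha hb
    _ = _ := by ring

section MildSolution

variable {V W : Type*} [NormedAddCommGroup V] [NormedSpace ℝ V] [CompleteSpace V]
  [NormedAddCommGroup W] [NormedSpace ℝ W]
  {ι : V →L[ℝ] W} {S : ℝ → ℝ → W →L[ℝ] V} {g : ℝ → W} {Y : ℝ → V} {δ T : ℝ}

lemma mild_solution_restart (hδ : 0 < δ)
    (hsemi : ∀ r₁ r₂ r₃ : ℝ, 0 ≤ r₁ → r₁ < r₂ → r₂ < r₃ → r₃ ≤ T →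
      S r₁ r₃ = (S r₂ r₃).comp (ι.comp (S r₁ r₂)))
    (hint : ∀ t, 0 < t → t ≤ T →
      IntegrableOn (fun s ↦ S (hfloor δ s) t (g (hfloor δ s))) (Ioc 0 t))
    (hY : ∀ t, 0 < t → t ≤ T →
      Y t = S 0 t (ι (Y 0)) + ∫ s in Ioc 0 t, S (hfloor δ s) t (g (hfloor δ s)))
    {a t : ℝ} (ha : 0 ≤ a) (hat : a < t) (htT : t ≤ T) :
    Y t = S a t (ι (Y a)) + ∫ s in Ioc a t, S (hfloor δ s) t (g (hfloor δ s)) := by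
  rcases ha.eq_or_lt with rfl | ha
  · exact hY t hat htT
  have hpast : ∫ s in Ioc 0 a, S (hfloor δ s) t (g (hfloor δ s)) =
      (S a t).comp ι (∫ s in Ioc 0 a, S (hfloor δ s) a (g (hfloor δ s))) := by
    rw [integral_Ioc_eq_integral_Ioo, integral_Ioc_eq_integral_Ioo,
      ← ContinuousLinearMap.integral_comp_comm _
        ((hint a ha (hat.le.trans htT)).mono_set Ioo_subset_Ioc_self)]
    refine setIntegral_congr_fun measurableSet_Ioo fun s hs ↦ ?_
    rw [hsemi _ a t (hfloor_nonneg hδ hs.1.le) ((hfloor_le hδ s).trans_lt hs.2) hat htT]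
    rfl
  rw [hY t (ha.trans hat) htT, setIntegral_Ioc_add_Ioc ha.le hat.le (hint t (ha.trans hat) htT),
    hpast, hY a ha (hat.le.trans htT), hsemi 0 a t le_rfl ha hat htT]
  simp only [ContinuousLinearMap.comp_apply, map_add, add_assoc]

lemma mild_solution_eq_step (hδ : 0 < δ)
    (hsemi : ∀ r₁ r₂ r₃ : ℝ, 0 ≤ r₁ → r₁ < r₂ → r₂ < r₃ → r₃ ≤ T →
      S r₁ r₃ = (S r₂ r₃).comp (ι.comp (S r₁ r₂)))
    (hint : ∀ t, 0 < t → t ≤ T →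
      IntegrableOn (fun s ↦ S (hfloor δ s) t (g (hfloor δ s))) (Ioc 0 t))
    (hY : ∀ t, 0 < t → t ≤ T →
      Y t = S 0 t (ι (Y 0)) + ∫ s in Ioc 0 t, S (hfloor δ s) t (g (hfloor δ s)))
    (k : ℕ) {t : ℝ} (hkt : k * δ < t) (htk : t ≤ (k + 1) * δ) (htT : t ≤ T) :
    Y t = S (k * δ) t (ι (Y (k * δ)) + (t - k * δ) • g (k * δ)) := by
  have hlast := setIntegral_Ioc_comp_hfloor hδ k (mod_cast hkt.le) (mod_cast htk)
    fun r ↦ S r t (g r)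
  push_cast at hlast
  rw [mild_solution_restart hδ hsemi hint hY (by positivity) hkt htT, hlast, map_add, map_smul]

end MildSolution

lemma le_exp_mul_add_integral_of_step_bound {u ρ : ℝ → ℝ} {c δ T : ℝ} (hc : 0 ≤ c)
    (hδ : 0 < δ) (hρ : ∀ s, 0 ≤ ρ s)
    (hstep : ∀ k : ℕ, ∀ t, k * δ < t → t ≤ (k + 1) * δ → t ≤ T →
      u t ≤ Real.exp (c * (t - k * δ)) * (u (k * δ) + (t - k * δ) * ρ (k * δ)))
    {t : ℝ} (ht : 0 ≤ t) (htT : t ≤ T)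
    (hint : IntegrableOn (fun s ↦ ρ (hfloor δ s)) (Ioc 0 t)) :
    u t ≤ Real.exp (c * t) * (u 0 + ∫ s in Ioc 0 t, ρ (hfloor δ s)) := by
  obtain ⟨n, hn⟩ := exists_nat_ge (t / δ)
  rw [div_le_iff₀ hδ] at hn
  induction n generalizing t with
  | zero =>
    obtain rfl : t = 0 := le_antisymm (by simpa using hn) ht
    simp
  | succ k ih =>
    rcases le_or_gt t (k * δ) with hle | hkt
    · exact ih ht htT hint hle
    have htk : t ≤ (k + 1) * δ := by exact_mod_cast hn
    have hk : 0 ≤ (k : ℝ) * δ := by positivity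
    have hprev := ih hk (hkt.le.trans htT) (hint.mono_set (Ioc_subset_Ioc_right hkt.le)) le_rfl
    have hlast := setIntegral_Ioc_comp_hfloor hδ k (mod_cast hkt.le) (mod_cast htk) ρ
    push_cast [smul_eq_mul] at hlast
    have hJ : 0 ≤ (t - k * δ) * ρ (k * δ) := mul_nonneg (by linarith) (hρ _)
    have hexp : Real.exp (c * (t - k * δ)) * Real.exp (c * (k * δ)) = Real.exp (c * t) := by
      rw [← Real.exp_add]; ring_nf
    have hexp_le : Real.exp (c * (t - k * δ)) ≤ Real.exp (c * t) :=
      Real.exp_le_exp.mpr (by nlinarith)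
    rw [setIntegral_Ioc_add_Ioc hk hkt.le hint, hlast]
    calc u t ≤ Real.exp (c * (t - k * δ)) * (u (k * δ) + (t - k * δ) * ρ (k * δ)) :=
          hstep k t hkt htk htT
      _ ≤ Real.exp (c * (t - k * δ)) *
          (Real.exp (c * (k * δ)) * (u 0 + ∫ s in Ioc 0 (k * δ), ρ (hfloor δ s)) +
            (t - k * δ) * ρ (k * δ)) := by gcongr
      _ = Real.exp (c * t) * (u 0 + ∫ s in Ioc 0 (k * δ), ρ (hfloor δ s)) +
          Real.exp (c * (t - k * δ)) * ((t - k * δ) * ρ (k * δ)) := by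
          rw [← hexp]; ring
      _ ≤ Real.exp (c * t) * (u 0 + ∫ s in Ioc 0 (k * δ), ρ (hfloor δ s)) +
          Real.exp (c * t) * ((t - k * δ) * ρ (k * δ)) := by gcongr
      _ = _ := by ring

theorem stmt1_general
    (T q c C : ℝ) (hT : 0 < T) (hq : 0 < q) (hc : 0 ≤ c) (hC : 0 ≤ C)
    (M : ℕ) (hM : 0 < M)
    {V W : Type*}
    [NormedAddCommGroup V] [NormedSpace ℝ V] [CompleteSpace V]
    [NormedAddCommGroup W] [NormedSpace ℝ W]
    (ι : V →L[ℝ] W)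
    (U R Vm : V → ℝ)
    (hU0 : ∀ v, 0 ≤ U v) (hR0 : ∀ v, 0 ≤ R v)
    (F : V → W)
    (S : ℝ → ℝ → (W →L[ℝ] V))
    (hFgrowth : ∀ u v : V, ‖F (u + v)‖ ≤ C * (1 + U u ^ q + U v ^ q))
    (hSsemi : ∀ r1 r2 r3 : ℝ, 0 ≤ r1 → r1 < r2 → r2 < r3 → r3 ≤ T →
      S r1 r3 = (S r2 r3).comp (ι.comp (S r1 r2)))
    (hLyap : ∀ u v : V, ∀ k : ℕ, k < M → ∀ t : ℝ,
      (k : ℝ) * T / M < t → t ≤ ((k : ℝ) + 1) * T / M →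
      U (S ((k : ℝ) * T / M) t
          (ι u + (t - (k : ℝ) * T / M) •
            (if Vm (u + v) ≤ (M : ℝ) / T then F (u + v) else 0)))
        ≤ Real.exp (c * (t - (k : ℝ) * T / M)) * (U u + (t - (k : ℝ) * T / M) * R v))
    {Ω : Type*}
    (O Y : ℝ → Ω → V)
    (hYint : ∀ ω : Ω, ∀ t : ℝ, 0 < t → t ≤ T →
      IntegrableOn
        (fun s => S (hfloor (T / M) s) t
          (if Vm (Y (hfloor (T / M) s) ω + O (hfloor (T / M) s) ω) ≤ (M : ℝ) / T
            then F (Y (hfloor (T / M) s) ω + O (hfloor (T / M) s) ω) else 0))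
        (Set.Ioc 0 t))
    (hYeq : ∀ ω : Ω, ∀ t : ℝ, 0 < t → t ≤ T →
      Y t ω = S 0 t (ι (Y 0 ω)) +
        ∫ s in Set.Ioc (0 : ℝ) t, S (hfloor (T / M) s) t
          (if Vm (Y (hfloor (T / M) s) ω + O (hfloor (T / M) s) ω) ≤ (M : ℝ) / T
            then F (Y (hfloor (T / M) s) ω + O (hfloor (T / M) s) ω) else 0)) :
    ∀ ω : Ω, ∀ t ∈ Set.Icc (0 : ℝ) T,
      IntegrableOn (fun s => R (O (hfloor (T / M) s) ω)) (Set.Ioc 0 t) →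
      ‖F (Y t ω + O t ω)‖ ≤
        C * (1 + 2 ^ max (q - 1) 0 * Real.exp (c * q * t) *
              (U (Y 0 ω) ^ q +
                (∫ s in Set.Ioc (0 : ℝ) t, R (O (hfloor (T / M) s) ω)) ^ q) +
            U (O t ω) ^ q) := by
  intro ω t ⟨ht0, htT⟩ hRint
  have hδ : 0 < T / M := div_pos hT (mod_cast hM)
  have hstep : ∀ k : ℕ, ∀ t', k * (T / M) < t' → t' ≤ (k + 1) * (T / M) → t' ≤ T →
      U (Y t' ω) ≤ Real.exp (c * (t' - k * (T / M))) *
        (U (Y (k * (T / M)) ω) + (t' - k * (T / M)) * R (O (k * (T / M)) ω)) := by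
    intro k t' hkt htk htT'
    have hkM : k < M := by
      have hMT : (M : ℝ) * (T / M) = T := by field_simp
      have : (k : ℝ) * (T / M) < M * (T / M) := by linarith
      exact_mod_cast lt_of_mul_lt_mul_right this hδ.le
    rw [mild_solution_eq_step (Y := fun r ↦ Y r ω)
      (g := fun r ↦ if Vm (Y r ω + O r ω) ≤ M / T then F (Y r ω + O r ω) else 0) hδ hSsemi
      (hYint ω) (hYeq ω) k hkt htk htT']
    simpa only [mul_div_assoc] using
      hLyap _ (O (k * (T / M)) ω) k hkM t' (by rwa [mul_div_assoc]) (by rwa [mul_div_assoc])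
  have hUY := le_exp_mul_add_integral_of_step_bound (u := fun r ↦ U (Y r ω))
    (ρ := fun r ↦ R (O r ω)) hc hδ (fun s ↦ hR0 _) hstep ht0 htT hRint
  have hI : 0 ≤ ∫ s in Ioc 0 t, R (O (hfloor (T / M) s) ω) :=
    setIntegral_nonneg measurableSet_Ioc fun s _ ↦ hR0 _
  calc ‖F (Y t ω + O t ω)‖ ≤ C * (1 + U (Y t ω) ^ q + U (O t ω) ^ q) := hFgrowth _ _
    _ ≤ _ := by gcongr; exact Real.rpow_le_of_le_exp_mul_add hq.le (hU0 _) (hU0 _) hI hUY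

theorem stmt1
    (T q c C : ℝ) (hT : 0 < T) (hq : 0 < q) (hc : 0 ≤ c) (hC : 0 ≤ C)
    (M : ℕ) (hM : 0 < M)
    {V W : Type*}
    [NormedAddCommGroup V] [NormedSpace ℝ V] [CompleteSpace V]
    [TopologicalSpace.SeparableSpace V] [MeasurableSpace V] [BorelSpace V]
    [NormedAddCommGroup W] [NormedSpace ℝ W] [CompleteSpace W]
    [TopologicalSpace.SeparableSpace W] [MeasurableSpace W] [BorelSpace W]
    (ι : V →L[ℝ] W) (hι_inj : Function.Injective ι) (hι_dense : DenseRange ι)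
    (U R Vm : V → ℝ)
    (hU0 : ∀ v, 0 ≤ U v) (hR0 : ∀ v, 0 ≤ R v) (hVm0 : ∀ v, 0 ≤ Vm v)
    (hUm : Measurable U) (hRm : Measurable R) (hVmm : Measurable Vm)
    (F : V → W) (hFm : Measurable F)
    (S : ℝ → ℝ → (W →L[ℝ] V))
    (hSm : ∀ w : W, Measurable fun p : ℝ × ℝ => S p.1 p.2 w)
    (hFgrowth : ∀ u v : V, ‖F (u + v)‖ ≤ C * (1 + U u ^ q + U v ^ q))
    (hSsemi : ∀ r1 r2 r3 : ℝ, 0 ≤ r1 → r1 < r2 → r2 < r3 → r3 ≤ T →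
      S r1 r3 = (S r2 r3).comp (ι.comp (S r1 r2)))
    (hLyap : ∀ u v : V, ∀ k : ℕ, k < M → ∀ t : ℝ,
      (k : ℝ) * T / M < t → t ≤ ((k : ℝ) + 1) * T / M →
      U (S ((k : ℝ) * T / M) t
          (ι u + (t - (k : ℝ) * T / M) •
            (if Vm (u + v) ≤ (M : ℝ) / T then F (u + v) else 0)))
        ≤ Real.exp (c * (t - (k : ℝ) * T / M)) * (U u + (t - (k : ℝ) * T / M) * R v))
    {Ω : Type*} [MeasurableSpace Ω] (P : Measure Ω) [IsProbabilityMeasure P]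
    (O Y : ℝ → Ω → V)
    (hYint : ∀ ω : Ω, ∀ t : ℝ, 0 < t → t ≤ T →
      IntegrableOn
        (fun s => S (hfloor (T / M) s) t
          (if Vm (Y (hfloor (T / M) s) ω + O (hfloor (T / M) s) ω) ≤ (M : ℝ) / T
            then F (Y (hfloor (T / M) s) ω + O (hfloor (T / M) s) ω) else 0))
        (Set.Ioc 0 t))
    (hYeq : ∀ ω : Ω, ∀ t : ℝ, 0 < t → t ≤ T →
      Y t ω = S 0 t (ι (Y 0 ω)) +
        ∫ s in Set.Ioc (0 : ℝ) t, S (hfloor (T / M) s) t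
          (if Vm (Y (hfloor (T / M) s) ω + O (hfloor (T / M) s) ω) ≤ (M : ℝ) / T
            then F (Y (hfloor (T / M) s) ω + O (hfloor (T / M) s) ω) else 0)) :
    ∀ ω : Ω, ∀ t ∈ Set.Icc (0 : ℝ) T,
      IntegrableOn (fun s => R (O (hfloor (T / M) s) ω)) (Set.Ioc 0 t) →
      ‖F (Y t ω + O t ω)‖ ≤
        C * (1 + 2 ^ max (q - 1) 0 * Real.exp (c * q * t) *
              (U (Y 0 ω) ^ q +
                (∫ s in Set.Ioc (0 : ℝ) t, R (O (hfloor (T / M) s) ω)) ^ q) +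
            U (O t ω) ^ q) :=
  stmt1_general T q c C hT hq hc hC M hM ι U R Vm hU0 hR0 F S hFgrowth hSsemi hLyap O Y hYint hYeq
end

section
/- Let v, w : D → ℝ be measurable with ‖v‖_{L^{2n²}} < ∞ and ‖w‖_{L^{2n²}} < ∞. Then ‖F̂(v) − F̂(w)‖_{L²}² ≤ max{1, λ_D(D)} · ( (n(n+1)/2) · max_{j∈{1,2,…,n}} |a_j| )² · ‖v−w‖_{L^{2n²}}² · ( 1 + ‖v‖_{L^{2n²}}^{max{1, 2(n−1)}} + ‖w‖_{L^{2n²}}^{max{1, 2(n−1)}} ). (Lemma 6.8 of the paper: local Lipschitz estimate for the polynomial nonlinearity from L^{2n²}(λ_D;ℝ) to L²(λ_D;ℝ).) -/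
open MeasureTheory

/-- The open box `D = (b1, b2)^d ⊆ ℝ^d`. -/
def box (d : ℕ) (b1 b2 : ℝ) : Set (Fin d → ℝ) :=
  Set.univ.pi fun _ => Set.Ioo b1 b2

/-- The `L^r(λ_D; ℝ)`-norm (as a real number, `∞` being sent to `0` by `toReal`;
all norms appearing below are finite under the stated hypotheses). -/
noncomputable def lpN (d : ℕ) (b1 b2 : ℝ) (r : ℝ) (u : (Fin d → ℝ) → ℝ) : ℝ :=
  (eLpNorm u (ENNReal.ofReal r) (volume.restrict (box d b1 b2))).toReal

/-- The polynomial Nemytskii operation `F̂(u) = Σ_{k=0}^n a_k u^k` (pointwise). -/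
noncomputable def Fpoly (d n : ℕ) (a : ℕ → ℝ) (u : (Fin d → ℝ) → ℝ) :
    (Fin d → ℝ) → ℝ :=
  fun x => ∑ k ∈ Finset.range (n + 1), a k * u x ^ k

/-!
Since `F̂(v) - F̂(w) = Σₖ aₖ (vᵏ - wᵏ)` and `|xᵏ - yᵏ| ≤ k max(|x|, |y|)^(k-1) |x - y|`,
pointwise `|F̂(v) - F̂(w)| ≤ (n(n+1)/2) maxⱼ |aⱼ| · √(1 + |v|^(2(n-1)) + |w|^(2(n-1))) · |v - w|`.
Hölder's inequality with `1/2 = (n² - 1)/(2n²) + 1/(2n²)` bounds the squared `L²` norm of the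
right-hand side by the `L^(n²/(n²-1))` norm of `1 + |v|^(2(n-1)) + |w|^(2(n-1))` times
`‖v - w‖²_{2n²}`. As `2(n-1) · n²/(n²-1) ≤ 2n²`, the finiteness of `λ(D)` lets the
`L^(2n²)` norms of `v` and `w` control this weight, at the price of a factor `max(1, λ(D))`.
For `n = 1` the nonlinearity is affine and no weight is needed.
-/

open scoped ENNReal

section Pointwise

open Finset

lemma abs_pow_sub_pow_le_mul_max_one_pow {x y : ℝ} {k m : ℕ} (hk : k ≤ m + 1) :
    |x ^ k - y ^ k| ≤ k * max 1 (max |x| |y|) ^ m * |x - y| := by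
  have hmax : max |x| |y| ^ (k - 1) ≤ max 1 (max |x| |y|) ^ m :=
    calc max |x| |y| ^ (k - 1) ≤ max (1 : ℝ) (max |x| |y|) ^ (k - 1) :=
          pow_le_pow_left₀ (by positivity) (le_max_right _ _) _
      _ ≤ max 1 (max |x| |y|) ^ m := pow_le_pow_right₀ (le_max_left _ _) (by omega)
  calc |x ^ k - y ^ k| ≤ |x - y| * k * max |x| |y| ^ (k - 1) := abs_pow_sub_pow_le x y k
    _ ≤ |x - y| * k * max 1 (max |x| |y|) ^ m := by gcongr
    _ = k * max 1 (max |x| |y|) ^ m * |x - y| := by ring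

lemma max_one_max_abs_pow_le_sqrt (x y : ℝ) (m : ℕ) :
    max 1 (max |x| |y|) ^ m ≤ √(1 + |x| ^ (2 * m) + |y| ^ (2 * m)) := by
  apply Real.le_sqrt_of_sq_le
  rw [← pow_mul, mul_comm]
  have hx := pow_nonneg (abs_nonneg x) (2 * m)
  have hy := pow_nonneg (abs_nonneg y) (2 * m)
  rcases max_choice 1 (max |x| |y|) with h | h <;> rw [h]
  · simp only [one_pow]; linarith
  · rcases max_choice |x| |y| with h' | h' <;> rw [h'] <;> linarith

lemma sum_range_succ_natCast_id (n : ℕ) : ∑ k ∈ range (n + 1), (k : ℝ) = n * (n + 1) / 2 := by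
  induction n with
  | zero => simp
  | succ n ih => rw [sum_range_succ, ih]; push_cast; ring

lemma abs_sum_mul_pow_sub_sum_mul_pow_le (a : ℕ → ℝ) (n : ℕ) {M : ℝ}
    (hM : ∀ k ∈ Icc 1 n, |a k| ≤ M) (x y : ℝ) :
    |∑ k ∈ range (n + 1), a k * x ^ k - ∑ k ∈ range (n + 1), a k * y ^ k| ≤
      n * (n + 1) / 2 * M * (max 1 (max |x| |y|) ^ (n - 1) * |x - y|) := by
  set B := max 1 (max |x| |y|) ^ (n - 1) * |x - y|
  have hterm : ∀ k ∈ range (n + 1), |a k * (x ^ k - y ^ k)| ≤ M * (k * B) := by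
    intro k hk
    have hkn : k ≤ n := Nat.lt_succ_iff.mp (mem_range.mp hk)
    rcases Nat.eq_zero_or_pos k with rfl | hk0
    · simp
    have hak := hM k (mem_Icc.mpr ⟨hk0, hkn⟩)
    rw [abs_mul]
    exact mul_le_mul hak
      ((abs_pow_sub_pow_le_mul_max_one_pow (by omega)).trans_eq (mul_assoc _ _ _))
      (abs_nonneg _) ((abs_nonneg _).trans hak)
  calc |∑ k ∈ range (n + 1), a k * x ^ k - ∑ k ∈ range (n + 1), a k * y ^ k|
      = |∑ k ∈ range (n + 1), a k * (x ^ k - y ^ k)| := by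
        simp only [mul_sub, sum_sub_distrib]
    _ ≤ ∑ k ∈ range (n + 1), M * (k * B) := (abs_sum_le_sum_abs _ _).trans (sum_le_sum hterm)
    _ = n * (n + 1) / 2 * M * B := by
        rw [← mul_sum, ← sum_mul, sum_range_succ_natCast_id]; ring

end Pointwise

lemma ENNReal.rpow_le_max_one {c : ℝ} (h0 : 0 ≤ c) (h1 : c ≤ 1) (X : ℝ≥0∞) :
    X ^ c ≤ max 1 X := by
  rcases le_total X 1 with hX | hX
  · exact (ENNReal.rpow_le_one hX h0).trans (le_max_left _ _)
  · exact ((ENNReal.rpow_le_rpow_of_exponent_le hX h1).trans_eq (ENNReal.rpow_one X)).trans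
      (le_max_right _ _)

section Lp

open Finset

variable {α : Type*} [MeasurableSpace α] {μ : Measure α}

lemma eLpNorm_one_le_max_one_measure_univ {r : ℝ≥0∞} (hr : 1 ≤ r) :
    eLpNorm (fun _ : α => (1 : ℝ)) r μ ≤ max 1 (μ Set.univ) := by
  rcases eq_or_ne μ 0 with rfl | hμ
  · simp
  rw [eLpNorm_const _ (one_pos.trans_le hr).ne' hμ, enorm_one, one_mul]
  refine ENNReal.rpow_le_max_one (by positivity) ?_ _
  rcases eq_or_ne r ⊤ with rfl | hr'
  · simp
  exact div_le_one_of_le₀ (ENNReal.toReal_one ▸ ENNReal.toReal_mono hr' hr) ENNReal.toReal_nonneg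

lemma eLpNorm_abs_pow_le {r p : ℝ} {e : ℕ} (hr : 1 ≤ r) (he : 0 < e) (hrp : r * e ≤ p)
    {u : α → ℝ} (hu : AEStronglyMeasurable u μ) :
    eLpNorm (fun x => |u x| ^ e) (.ofReal r) μ ≤
      max 1 (μ Set.univ) * eLpNorm u (.ofReal p) μ ^ e := by
  have he' : (0 : ℝ) < e := Nat.cast_pos.mpr he
  have hre : 0 < r * e := by positivity
  have hp : 0 < p := hre.trans_le hrp
  set δ := 1 / (r * e) - 1 / p
  have hδ0 : 0 ≤ δ * e := mul_nonneg (sub_nonneg.mpr (one_div_le_one_div_of_le hre hrp)) he'.le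
  have hδ1 : δ * e ≤ 1 := by
    have : δ * e = 1 / r - e / p := by simp only [δ]; field_simp
    rw [this]
    linarith [(div_le_one (by linarith : (0 : ℝ) < r)).mpr hr, div_nonneg he'.le hp.le]
  have hemb := eLpNorm_le_eLpNorm_mul_rpow_measure_univ (μ := μ)
    (ENNReal.ofReal_le_ofReal hrp) hu
  rw [ENNReal.toReal_ofReal hre.le, ENNReal.toReal_ofReal hp.le] at hemb
  have hpow : (fun x => |u x| ^ e) = fun x => ‖u x‖ ^ (e : ℝ) := by
    ext x; rw [Real.norm_eq_abs, Real.rpow_natCast]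
  calc eLpNorm (fun x => |u x| ^ e) (.ofReal r) μ
      = eLpNorm u (.ofReal (r * e)) μ ^ (e : ℝ) := by
        rw [hpow, eLpNorm_norm_rpow u he', ENNReal.ofReal_mul (by linarith)]
    _ ≤ (eLpNorm u (.ofReal p) μ * μ Set.univ ^ δ) ^ (e : ℝ) := by gcongr
    _ = μ Set.univ ^ (δ * e) * eLpNorm u (.ofReal p) μ ^ e := by
        rw [ENNReal.mul_rpow_of_nonneg _ _ he'.le, ← ENNReal.rpow_mul, ENNReal.rpow_natCast,
          mul_comm]
    _ ≤ max 1 (μ Set.univ) * eLpNorm u (.ofReal p) μ ^ e := by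
        gcongr; exact ENNReal.rpow_le_max_one hδ0 hδ1 _

lemma eLpNorm_one_add_abs_pow_add_abs_pow_le {r p : ℝ} {e : ℕ} (hr : 1 ≤ r) (he : 0 < e)
    (hrp : r * e ≤ p) {u v : α → ℝ} (hu : AEStronglyMeasurable u μ)
    (hv : AEStronglyMeasurable v μ) :
    eLpNorm (fun x => 1 + |u x| ^ e + |v x| ^ e) (.ofReal r) μ ≤
      max 1 (μ Set.univ) *
        (1 + eLpNorm u (.ofReal p) μ ^ e + eLpNorm v (.ofReal p) μ ^ e) := by
  have hr' : 1 ≤ ENNReal.ofReal r := ENNReal.one_le_ofReal.mpr hr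
  have hu' : AEStronglyMeasurable (fun x => |u x| ^ e) μ :=
    (continuous_abs.comp_aestronglyMeasurable hu).pow e
  have hv' : AEStronglyMeasurable (fun x => |v x| ^ e) μ :=
    (continuous_abs.comp_aestronglyMeasurable hv).pow e
  have hsplit : (fun x => 1 + |u x| ^ e + |v x| ^ e) =
      (fun _ => (1 : ℝ)) + (fun x => |u x| ^ e) + fun x => |v x| ^ e := rfl
  calc eLpNorm (fun x => 1 + |u x| ^ e + |v x| ^ e) (.ofReal r) μ
      ≤ eLpNorm (fun _ => (1 : ℝ)) (.ofReal r) μ + eLpNorm (fun x => |u x| ^ e) (.ofReal r) μ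
          + eLpNorm (fun x => |v x| ^ e) (.ofReal r) μ := by
        rw [hsplit]
        refine (eLpNorm_add_le (aestronglyMeasurable_const.add hu') hv' hr').trans ?_
        gcongr
        exact eLpNorm_add_le aestronglyMeasurable_const hu' hr'
    _ ≤ max 1 (μ Set.univ) + max 1 (μ Set.univ) * eLpNorm u (.ofReal p) μ ^ e
          + max 1 (μ Set.univ) * eLpNorm v (.ofReal p) μ ^ e := by
        gcongr
        · exact eLpNorm_one_le_max_one_measure_univ hr'
        · exact eLpNorm_abs_pow_le hr he hrp hu
        · exact eLpNorm_abs_pow_le hr he hrp hv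
    _ = _ := by rw [mul_add, mul_add, mul_one]

lemma eLpNorm_sqrt_mul_sq_le {p : ℝ} (hp : 2 < p) {G f : α → ℝ}
    (hG : AEStronglyMeasurable G μ) (hf : AEStronglyMeasurable f μ) :
    eLpNorm (fun x => √(G x) * f x) 2 μ ^ 2 ≤
      eLpNorm G (.ofReal (p / (p - 2))) μ * eLpNorm f (.ofReal p) μ ^ 2 := by
  set q := p / (p - 2)
  have : ENNReal.HolderTriple (.ofReal (2 * q)) (.ofReal p) 2 := by
    have : Real.HolderTriple (2 * q) p 2 :=
      ⟨by simp only [q]; field_simp; ring, by positivity, by linarith⟩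
    simpa using this.ennrealOfReal
  have hHolder := eLpNorm_le_eLpNorm_mul_eLpNorm'_of_norm (p := .ofReal (2 * q))
    (q := .ofReal p) (r := 2) (Real.continuous_sqrt.comp_aestronglyMeasurable hG) hf
    (· * ·) 1 (.of_forall fun x => by simp [norm_mul])
  simp only [ENNReal.coe_one, one_mul] at hHolder
  have hsqrt : eLpNorm (fun x => √(G x)) (.ofReal (2 * q)) μ ≤
      eLpNorm G (.ofReal q) μ ^ (1 / 2 : ℝ) :=
    calc eLpNorm (fun x => √(G x)) (.ofReal (2 * q)) μ
        ≤ eLpNorm (fun x => ‖G x‖ ^ (1 / 2 : ℝ)) (.ofReal (2 * q)) μ := by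
          refine eLpNorm_mono_real fun x => ?_
          rw [Real.norm_eq_abs, abs_of_nonneg (Real.sqrt_nonneg _), ← Real.sqrt_eq_rpow]
          exact Real.sqrt_le_sqrt (Real.le_norm_self _)
      _ = eLpNorm G (.ofReal q) μ ^ (1 / 2 : ℝ) := by
          rw [eLpNorm_norm_rpow G (by norm_num), ← ENNReal.ofReal_mul (by positivity)]
          congr 3; ring
  calc eLpNorm (fun x => √(G x) * f x) 2 μ ^ 2
      ≤ (eLpNorm G (.ofReal q) μ ^ (1 / 2 : ℝ) * eLpNorm f (.ofReal p) μ) ^ 2 := by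
        gcongr; exact hHolder.trans (by gcongr)
    _ = eLpNorm G (.ofReal q) μ * eLpNorm f (.ofReal p) μ ^ 2 := by
        rw [mul_pow, ← ENNReal.rpow_natCast, ← ENNReal.rpow_mul]; norm_num

lemma eLpNorm_sqrt_one_add_abs_pow_mul_sq_le {p : ℝ} (hp : 2 < p) {e : ℕ} (he : 0 < e)
    (hep : e ≤ p - 2) {u v f : α → ℝ} (hu : AEStronglyMeasurable u μ)
    (hv : AEStronglyMeasurable v μ) (hf : AEStronglyMeasurable f μ) :
    eLpNorm (fun x => √(1 + |u x| ^ e + |v x| ^ e) * f x) 2 μ ^ 2 ≤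
      max 1 (μ Set.univ) * eLpNorm f (.ofReal p) μ ^ 2 *
        (1 + eLpNorm u (.ofReal p) μ ^ e + eLpNorm v (.ofReal p) μ ^ e) := by
  have hp2 : 0 < p - 2 := by linarith
  have hr : 1 ≤ p / (p - 2) := (one_le_div hp2).mpr (by linarith)
  have hrp : p / (p - 2) * e ≤ p := by
    rw [div_mul_eq_mul_div, div_le_iff₀ hp2]; gcongr
  have hG : AEStronglyMeasurable (fun x => 1 + |u x| ^ e + |v x| ^ e) μ :=
    (aestronglyMeasurable_const.add ((continuous_abs.comp_aestronglyMeasurable hu).pow e)).add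
      ((continuous_abs.comp_aestronglyMeasurable hv).pow e)
  calc eLpNorm (fun x => √(1 + |u x| ^ e + |v x| ^ e) * f x) 2 μ ^ 2
      ≤ eLpNorm (fun x => 1 + |u x| ^ e + |v x| ^ e) (.ofReal (p / (p - 2))) μ *
          eLpNorm f (.ofReal p) μ ^ 2 := eLpNorm_sqrt_mul_sq_le hp hG hf
    _ ≤ max 1 (μ Set.univ) * (1 + eLpNorm u (.ofReal p) μ ^ e + eLpNorm v (.ofReal p) μ ^ e) *
          eLpNorm f (.ofReal p) μ ^ 2 := by
        gcongr; exact eLpNorm_one_add_abs_pow_add_abs_pow_le hr he hrp hu hv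
    _ = _ := by ring

theorem eLpNorm_sum_mul_pow_sub_sum_mul_pow_sq_le_of_two_le (a : ℕ → ℝ) {n : ℕ} (hn : 2 ≤ n)
    {M : ℝ} (hM : ∀ k ∈ Icc 1 n, |a k| ≤ M) {v w : α → ℝ} (hv : AEStronglyMeasurable v μ)
    (hw : AEStronglyMeasurable w μ) :
    eLpNorm (fun x => ∑ k ∈ range (n + 1), a k * v x ^ k - ∑ k ∈ range (n + 1), a k * w x ^ k)
        2 μ ^ 2 ≤
      max 1 (μ Set.univ) * ENNReal.ofReal (n * (n + 1) / 2 * M) ^ 2 *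
        eLpNorm (fun x => v x - w x) (.ofReal (2 * n ^ 2)) μ ^ 2 *
        (1 + eLpNorm v (.ofReal (2 * n ^ 2)) μ ^ (2 * (n - 1)) +
          eLpNorm w (.ofReal (2 * n ^ 2)) μ ^ (2 * (n - 1))) := by
  have hC : 0 ≤ (n : ℝ) * (n + 1) / 2 * M :=
    mul_nonneg (by positivity) ((abs_nonneg _).trans (hM 1 (mem_Icc.mpr ⟨le_rfl, by omega⟩)))
  have hle : eLpNorm (fun x => ∑ k ∈ range (n + 1), a k * v x ^ k -
        ∑ k ∈ range (n + 1), a k * w x ^ k) 2 μ ≤ ENNReal.ofReal (n * (n + 1) / 2 * M) *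
      eLpNorm (fun x => √(1 + |v x| ^ (2 * (n - 1)) + |w x| ^ (2 * (n - 1))) * (v x - w x))
        2 μ :=
    eLpNorm_le_mul_eLpNorm_of_ae_le_mul (.of_forall fun x => by
      rw [Real.norm_eq_abs, Real.norm_eq_abs, abs_mul, abs_of_nonneg (Real.sqrt_nonneg _)]
      refine (abs_sum_mul_pow_sub_sum_mul_pow_le a n hM (v x) (w x)).trans ?_
      gcongr; exact max_one_max_abs_pow_le_sqrt _ _ _) 2
  have hn' : (2 : ℝ) ≤ n := by exact_mod_cast hn
  have hP : 2 < 2 * (n : ℝ) ^ 2 := by nlinarith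
  have hep : ((2 * (n - 1) : ℕ) : ℝ) ≤ 2 * (n : ℝ) ^ 2 - 2 := by
    push_cast [Nat.cast_sub (by omega : 1 ≤ n)]; nlinarith
  calc _ ≤ (ENNReal.ofReal (n * (n + 1) / 2 * M) *
        eLpNorm (fun x => √(1 + |v x| ^ (2 * (n - 1)) + |w x| ^ (2 * (n - 1))) * (v x - w x))
          2 μ) ^ 2 := by gcongr
    _ = ENNReal.ofReal (n * (n + 1) / 2 * M) ^ 2 *
        eLpNorm (fun x => √(1 + |v x| ^ (2 * (n - 1)) + |w x| ^ (2 * (n - 1))) * (v x - w x))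
          2 μ ^ 2 := mul_pow _ _ _
    _ ≤ _ := by
        rw [mul_comm (max _ _), mul_assoc, mul_assoc]
        gcongr
        rw [← mul_assoc]
        exact eLpNorm_sqrt_one_add_abs_pow_mul_sq_le hP (by omega) hep hv hw (hv.sub hw)

theorem eLpNorm_sum_mul_pow_sub_sum_mul_pow_sq_le (a : ℕ → ℝ) {n : ℕ} (hn : 1 ≤ n) {M : ℝ}
    (hM : ∀ k ∈ Icc 1 n, |a k| ≤ M) {v w : α → ℝ} (hv : AEStronglyMeasurable v μ)
    (hw : AEStronglyMeasurable w μ) :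
    eLpNorm (fun x => ∑ k ∈ range (n + 1), a k * v x ^ k - ∑ k ∈ range (n + 1), a k * w x ^ k)
        2 μ ^ 2 ≤
      max 1 (μ Set.univ) * ENNReal.ofReal (n * (n + 1) / 2 * M) ^ 2 *
        eLpNorm (fun x => v x - w x) (.ofReal (2 * n ^ 2)) μ ^ 2 *
        (1 + eLpNorm v (.ofReal (2 * n ^ 2)) μ ^ max 1 (2 * (n - 1)) +
          eLpNorm w (.ofReal (2 * n ^ 2)) μ ^ max 1 (2 * (n - 1))) := by
  obtain rfl | hn2 := hn.eq_or_lt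
  · have hle : eLpNorm (fun x => ∑ k ∈ range (1 + 1), a k * v x ^ k -
          ∑ k ∈ range (1 + 1), a k * w x ^ k) 2 μ ≤
        ENNReal.ofReal (1 * (1 + 1) / 2 * M) * eLpNorm (fun x => v x - w x) 2 μ :=
      eLpNorm_le_mul_eLpNorm_of_ae_le_mul (.of_forall fun x => by
        simpa only [Real.norm_eq_abs, Nat.cast_one, Nat.sub_self, pow_zero, one_mul] using
          abs_sum_mul_pow_sub_sum_mul_pow_le a 1 hM (v x) (w x)) 2
    simp only [Nat.cast_one, one_pow, mul_one, ENNReal.ofReal_ofNat]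
    calc _ ≤ (ENNReal.ofReal (1 * (1 + 1) / 2 * M) * eLpNorm (fun x => v x - w x) 2 μ) ^ 2 := by
          gcongr
      _ = 1 * ENNReal.ofReal (1 * (1 + 1) / 2 * M) ^ 2 *
          eLpNorm (fun x => v x - w x) 2 μ ^ 2 * 1 := by ring
      _ ≤ _ := by gcongr; exacts [le_max_left _ _, le_add_right (le_add_right le_rfl)]
  rw [max_eq_right (by omega : 1 ≤ 2 * (n - 1))]
  exact eLpNorm_sum_mul_pow_sub_sum_mul_pow_sq_le_of_two_le a hn2 hM hv hw

theorem toReal_eLpNorm_sum_mul_pow_sub_sum_mul_pow_sq_le [IsFiniteMeasure μ] (a : ℕ → ℝ)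
    {n : ℕ} (hn : 1 ≤ n) {M : ℝ} (hM : ∀ k ∈ Icc 1 n, |a k| ≤ M) {v w : α → ℝ}
    (hv : AEStronglyMeasurable v μ) (hw : AEStronglyMeasurable w μ)
    (hv' : eLpNorm v (.ofReal (2 * n ^ 2)) μ < ⊤) (hw' : eLpNorm w (.ofReal (2 * n ^ 2)) μ < ⊤) :
    (eLpNorm (fun x => ∑ k ∈ range (n + 1), a k * v x ^ k - ∑ k ∈ range (n + 1), a k * w x ^ k)
        2 μ).toReal ^ 2 ≤
      max 1 (μ Set.univ).toReal * (n * (n + 1) / 2 * M) ^ 2 *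
        (eLpNorm (fun x => v x - w x) (.ofReal (2 * n ^ 2)) μ).toReal ^ 2 *
        (1 + (eLpNorm v (.ofReal (2 * n ^ 2)) μ).toReal ^ max 1 (2 * (n - 1)) +
          (eLpNorm w (.ofReal (2 * n ^ 2)) μ).toReal ^ max 1 (2 * (n - 1))) := by
  have hC : 0 ≤ (n : ℝ) * (n + 1) / 2 * M :=
    mul_nonneg (by positivity) ((abs_nonneg _).trans (hM 1 (mem_Icc.mpr ⟨le_rfl, hn⟩)))
  have hP : 1 ≤ ENNReal.ofReal (2 * n ^ 2) := by
    have : (1 : ℝ) ≤ n := by exact_mod_cast hn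
    exact ENNReal.one_le_ofReal.mpr (by nlinarith)
  have hvw : eLpNorm (fun x => v x - w x) (.ofReal (2 * n ^ 2)) μ < ⊤ :=
    (eLpNorm_sub_le hv hw hP).trans_lt (ENNReal.add_lt_top.mpr ⟨hv', hw'⟩)
  have h := ENNReal.toReal_mono (by finiteness)
    (eLpNorm_sum_mul_pow_sub_sum_mul_pow_sq_le a hn hM hv hw)
  rw [ENNReal.toReal_mul, ENNReal.toReal_mul, ENNReal.toReal_mul,
    ENNReal.toReal_add (by finiteness) (by finiteness),
    ENNReal.toReal_add (by finiteness) (by finiteness),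
    ENNReal.toReal_max (by finiteness) (by finiteness)] at h
  simpa only [ENNReal.toReal_pow, ENNReal.toReal_one, ENNReal.toReal_ofReal hC] using h

end Lp

lemma volume_box_ne_top (d : ℕ) (b1 b2 : ℝ) : volume (box d b1 b2) ≠ ⊤ := by
  simp [box, volume_pi_pi, Real.volume_Ioo]

theorem stmt12_general
    (d : ℕ) (n : ℕ) (hn : Odd n)
    (a : ℕ → ℝ) (b1 b2 : ℝ)
    (v w : (Fin d → ℝ) → ℝ) (hvm : Measurable v) (hwm : Measurable w)
    (hv : eLpNorm v (ENNReal.ofReal (2 * (n : ℝ) ^ 2)) (volume.restrict (box d b1 b2)) < ⊤)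
    (hw : eLpNorm w (ENNReal.ofReal (2 * (n : ℝ) ^ 2)) (volume.restrict (box d b1 b2)) < ⊤) :
    lpN d b1 b2 2 (fun x => Fpoly d n a v x - Fpoly d n a w x) ^ 2 ≤
      max 1 (volume (box d b1 b2)).toReal *
        ((n : ℝ) * ((n : ℝ) + 1) / 2 *
            (Finset.Icc 1 n).sup' (Finset.nonempty_Icc.mpr hn.pos) (fun j => |a j|)) ^ 2 *
        lpN d b1 b2 (2 * (n : ℝ) ^ 2) (fun x => v x - w x) ^ 2 *
        (1 + lpN d b1 b2 (2 * (n : ℝ) ^ 2) v ^ max 1 (2 * (n - 1)) +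
          lpN d b1 b2 (2 * (n : ℝ) ^ 2) w ^ max 1 (2 * (n - 1))) := by
  have : IsFiniteMeasure (volume.restrict (box d b1 b2)) :=
    isFiniteMeasure_restrict.mpr (volume_box_ne_top d b1 b2)
  have h := toReal_eLpNorm_sum_mul_pow_sub_sum_mul_pow_sq_le a hn.pos
    (M := (Finset.Icc 1 n).sup' (Finset.nonempty_Icc.mpr hn.pos) fun j => |a j|)
    (fun k hk => Finset.le_sup' (fun j => |a j|) hk)
    hvm.aestronglyMeasurable hwm.aestronglyMeasurable hv hw
  simpa [lpN, Fpoly] using h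

theorem stmt12
    (T : ℝ) (hT : 0 < T) (d : ℕ) (hd : 0 < d) (n : ℕ) (hn : Odd n)
    (a : ℕ → ℝ) (han : a n < 0) (b1 b2 : ℝ) (hb : b1 < b2)
    (v w : (Fin d → ℝ) → ℝ) (hvm : Measurable v) (hwm : Measurable w)
    (hv : eLpNorm v (ENNReal.ofReal (2 * (n : ℝ) ^ 2)) (volume.restrict (box d b1 b2)) < ⊤)
    (hw : eLpNorm w (ENNReal.ofReal (2 * (n : ℝ) ^ 2)) (volume.restrict (box d b1 b2)) < ⊤) :
    lpN d b1 b2 2 (fun x => Fpoly d n a v x - Fpoly d n a w x) ^ 2 ≤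
      max 1 (volume (box d b1 b2)).toReal *
        ((n : ℝ) * ((n : ℝ) + 1) / 2 *
            (Finset.Icc 1 n).sup' (Finset.nonempty_Icc.mpr hn.pos) (fun j => |a j|)) ^ 2 *
        lpN d b1 b2 (2 * (n : ℝ) ^ 2) (fun x => v x - w x) ^ 2 *
        (1 + lpN d b1 b2 (2 * (n : ℝ) ^ 2) v ^ max 1 (2 * (n - 1)) +
          lpN d b1 b2 (2 * (n : ℝ) ^ 2) w ^ max 1 (2 * (n - 1))) :=
  stmt12_general d n hn a b1 b2 v w hvm hwm hv hw
end
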